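/- Let V_a ⪯ V_b be symmetric matrices with V_a ⪰ λI, and symmetric perturbations E_a, E_b of operator norm at most η with ρ := η/λ < 1, c_ρ := (1+ρ)/(1−ρ). If λ_max((V_a+E_a)^{-1/2}(V_b+E_b)(V_a+E_a)^{-1/2}) > α for some α > c_ρ, then det(V_b)/det(V_a) > α/c_ρ. -/

import Mathlib

open Matrix

open scoped ComplexOrder in
/-- The square root of a positive semidefinite matrix, as defined in Mathlib (Dec 2024). -/
noncomputable def Matrix.PosSemidef.sqrt {n : Type*} [Fintype n] [DecidableEq n] {𝕜 : Type*} [RCLike 𝕜]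
    {A : Matrix n n 𝕜} (hA : A.PosSemidef) : Matrix n n 𝕜 :=
  (hA.1.eigenvectorUnitary : Matrix n n 𝕜) * diagonal ((↑) ∘ Real.sqrt ∘ hA.1.eigenvalues) *
    (star (hA.1.eigenvectorUnitary : Matrix n n 𝕜))

/-!
Let `S = (V_a + E_a)^{1/2}`. A unit top eigenvector `v` of `S⁻¹ (V_b + E_b) S⁻¹` gives
`u = S⁻¹ v` with `α ⟪u, (V_a + E_a) u⟫ < ⟪u, (V_b + E_b) u⟫`. Since `|E| ≤ η ≤ ρ λ` and
`λ ≤ V_a ≤ V_b`, the perturbations cost at most a factor `1 ± ρ` on each side, so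
`(α / c_ρ) ⟪u, V_a u⟫ < ⟪u, V_b u⟫`. With `T = V_a^{1/2}`, the matrix `N = T⁻¹ V_b T⁻¹` satisfies
`N ≥ 1` and has Rayleigh quotient above `α / c_ρ` at `T u`; so its largest eigenvalue exceeds
`α / c_ρ`, and since all its eigenvalues are at least `1`, so does `det N = det V_b / det V_a`.
-/

open scoped MatrixOrder ComplexOrder

namespace Matrix

variable {n : Type*} [Fintype n] [DecidableEq n]

lemma PosSemidef.sqrt_eq_cfcSqrt {𝕜 : Type*} [RCLike 𝕜] {A : Matrix n n 𝕜} (hA : A.PosSemidef) :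
    hA.sqrt = CFC.sqrt A := by
  rw [CFC.sqrt_eq_real_sqrt A hA.nonneg, cfcₙ_eq_cfc, hA.1.cfc_eq]
  rfl

omit [DecidableEq n] in
lemma dotProduct_mulVec_le_of_posSemidef_sub {A B : Matrix n n ℝ} (h : (B - A).PosSemidef)
    (x : n → ℝ) : x ⬝ᵥ A *ᵥ x ≤ x ⬝ᵥ B *ᵥ x := by
  have := h.dotProduct_mulVec_nonneg x
  rw [star_trivial, sub_mulVec, dotProduct_sub] at this
  linarith

lemma dotProduct_smul_one_mulVec (c : ℝ) (x : n → ℝ) :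
    x ⬝ᵥ (c • (1 : Matrix n n ℝ)) *ᵥ x = c * (x ⬝ᵥ x) := by
  rw [smul_mulVec, one_mulVec, dotProduct_smul, smul_eq_mul]

omit [Fintype n] in
lemma posDef_of_posSemidef_sub_smul_one {A : Matrix n n ℝ} {c : ℝ} (h : (A - c • 1).PosSemidef)
    (hc : 0 < c) : A.PosDef := by
  have hc1 : (c • (1 : Matrix n n ℝ)).PosDef := by
    rw [smul_one_eq_diagonal]
    exact PosDef.diagonal fun _ => hc
  simpa using PosDef.posSemidef_add h hc1

omit [DecidableEq n] in
lemma dotProduct_mulVec_mul_mul {P : Matrix n n ℝ} (hP : P.IsHermitian) (B : Matrix n n ℝ)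
    (x : n → ℝ) : x ⬝ᵥ (P * B * P) *ᵥ x = (P *ᵥ x) ⬝ᵥ B *ᵥ (P *ᵥ x) := by
  rw [← mulVec_mulVec, ← mulVec_mulVec, dotProduct_mulVec, ← mulVec_transpose,
    ← conjTranspose_eq_transpose_of_trivial, hP.eq]

namespace IsHermitian

variable {A : Matrix n n ℝ} (hA : A.IsHermitian)
include hA

lemma exists_dotProduct_self_eq_one_and_eq_eigenvalues (i : n) :
    ∃ v : n → ℝ, v ⬝ᵥ v = 1 ∧ v ⬝ᵥ A *ᵥ v = hA.eigenvalues i := by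
  refine ⟨hA.eigenvectorBasis i, ?_, by simpa using (hA.eigenvalues_eq i).symm⟩
  have h := real_inner_self_eq_norm_sq (hA.eigenvectorBasis i)
  rw [hA.eigenvectorBasis.orthonormal.1 i, EuclideanSpace.inner_eq_star_dotProduct] at h
  simpa using h

lemma le_eigenvalues_of_posSemidef_sub_smul_one {c : ℝ} (h : (A - c • 1).PosSemidef) (i : n) :
    c ≤ hA.eigenvalues i := by
  have hmem : hA.eigenvalues i - c ∈ spectrum ℝ (A - c • 1) := by
    rw [← Algebra.algebraMap_eq_smul_one, ← spectrum.sub_singleton_eq]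
    exact Set.sub_mem_sub (hA.eigenvalues_mem_spectrum_real i) rfl
  simpa only [Set.mem_ofPred_eq, sub_nonneg] using
    (posSemidef_iff_isHermitian_and_spectrum_nonneg.mp h).2 hmem

lemma posSemidef_smul_one_sub_of_eigenvalues_le {μ : ℝ} (h : ∀ i, hA.eigenvalues i ≤ μ) :
    (μ • 1 - A).PosSemidef := by
  refine posSemidef_iff_isHermitian_and_spectrum_nonneg.mpr
    ⟨(isHermitian_one.smul (IsSelfAdjoint.all μ)).sub hA, ?_⟩
  rw [← Algebra.algebraMap_eq_smul_one, ← spectrum.singleton_sub_eq,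
    hA.spectrum_real_eq_range_eigenvalues]
  rintro _ ⟨_, rfl, _, ⟨i, rfl⟩, rfl⟩
  exact sub_nonneg.mpr (h i)

lemma exists_lt_eigenvalues_of_lt_dotProduct {t : ℝ} {x : n → ℝ}
    (h : t * (x ⬝ᵥ x) < x ⬝ᵥ A *ᵥ x) : ∃ i, t < hA.eigenvalues i := by
  by_contra! hle
  have := dotProduct_mulVec_le_of_posSemidef_sub
    (by simpa using hA.posSemidef_smul_one_sub_of_eigenvalues_le hle) x
  rw [dotProduct_smul_one_mulVec] at this
  linarith

lemma lt_det_of_posSemidef_sub_one (h : (A - 1).PosSemidef) {t : ℝ} {i : n}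
    (ht : t < hA.eigenvalues i) : t < A.det := by
  have hone : ∀ j, 1 ≤ hA.eigenvalues j :=
    hA.le_eigenvalues_of_posSemidef_sub_smul_one (by simpa using h)
  have hprod : 1 ≤ ∏ j ∈ Finset.univ.erase i, hA.eigenvalues j :=
    Finset.one_le_prod fun j _ => hone j
  calc t < hA.eigenvalues i := ht
    _ ≤ hA.eigenvalues i * ∏ j ∈ Finset.univ.erase i, hA.eigenvalues j :=
        le_mul_of_one_le_right (zero_le_one.trans (hone i)) hprod
    _ = A.det := by
        rw [Finset.mul_prod_erase _ _ (Finset.mem_univ i), hA.det_eq_prod_eigenvalues]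
        simp

end IsHermitian

lemma isHermitian_inv_sqrt (A : Matrix n n ℝ) : (CFC.sqrt A)⁻¹.IsHermitian :=
  (nonneg_iff_posSemidef.mp (CFC.sqrt_nonneg A)).isHermitian.inv

namespace PosDef

variable {A : Matrix n n ℝ} (hA : A.PosDef)
include hA

lemma isUnit_det_sqrt : IsUnit (CFC.sqrt A).det := by
  rw [hA.posSemidef.det_sqrt, RCLike.sqrt_real]
  exact (Real.sqrt_pos.mpr hA.det_pos).ne'.isUnit

lemma det_sqrt_mul_self : (CFC.sqrt A).det * (CFC.sqrt A).det = A.det := by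
  rw [← det_mul, CFC.sqrt_mul_sqrt_self A hA.posSemidef.nonneg]

lemma inv_sqrt_mul_mul_inv_sqrt : (CFC.sqrt A)⁻¹ * A * (CFC.sqrt A)⁻¹ = 1 := by
  have hS := hA.isUnit_det_sqrt
  set S := CFC.sqrt A
  rw [← CFC.sqrt_mul_sqrt_self A hA.posSemidef.nonneg, Matrix.mul_assoc, Matrix.mul_assoc,
    mul_nonsing_inv _ hS, Matrix.mul_one, nonsing_inv_mul _ hS]

end PosDef

lemma exists_lt_dotProduct_of_lt_eigenvalues {A B : Matrix n n ℝ} (hA : A.PosDef)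
    (hM : ((CFC.sqrt A)⁻¹ * B * (CFC.sqrt A)⁻¹).IsHermitian) {α : ℝ} {i : n}
    (hα : α < hM.eigenvalues i) : ∃ u : n → ℝ, α * (u ⬝ᵥ A *ᵥ u) < u ⬝ᵥ B *ᵥ u := by
  obtain ⟨v, hvv, hvMv⟩ := hM.exists_dotProduct_self_eq_one_and_eq_eigenvalues i
  refine ⟨(CFC.sqrt A)⁻¹ *ᵥ v, ?_⟩
  have hA' : (CFC.sqrt A)⁻¹ *ᵥ v ⬝ᵥ A *ᵥ ((CFC.sqrt A)⁻¹ *ᵥ v) = 1 := by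
    rw [← dotProduct_mulVec_mul_mul (isHermitian_inv_sqrt A), hA.inv_sqrt_mul_mul_inv_sqrt,
      one_mulVec, hvv]
  rwa [hA', mul_one, ← dotProduct_mulVec_mul_mul (isHermitian_inv_sqrt A), hvMv]

lemma lt_det_div_det_of_lt_dotProduct {A B : Matrix n n ℝ} (hA : A.PosDef) (hB : B.IsHermitian)
    (hAB : (B - A).PosSemidef) {t : ℝ} {u : n → ℝ} (h : t * (u ⬝ᵥ A *ᵥ u) < u ⬝ᵥ B *ᵥ u) :
    t < B.det / A.det := by
  set P := (CFC.sqrt A)⁻¹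
  have hP : P.IsHermitian := isHermitian_inv_sqrt A
  have hPAP : P * A * P = 1 := hA.inv_sqrt_mul_mul_inv_sqrt
  have hN : (P * B * P).IsHermitian := by
    simpa only [hP.eq] using isHermitian_conjTranspose_mul_mul P hB
  have hN1 : (P * B * P - 1).PosSemidef := by
    rw [← hPAP, ← Matrix.sub_mul, ← Matrix.mul_sub]
    simpa only [hP.eq] using hAB.conjTranspose_mul_mul_same P
  set w := CFC.sqrt A *ᵥ u
  have hPw : P *ᵥ w = u := by rw [mulVec_mulVec, nonsing_inv_mul _ hA.isUnit_det_sqrt, one_mulVec]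
  have hAw : u ⬝ᵥ A *ᵥ u = w ⬝ᵥ w := by
    rw [← hPw, ← dotProduct_mulVec_mul_mul hP, hPAP, one_mulVec]
  have hBw : u ⬝ᵥ B *ᵥ u = w ⬝ᵥ (P * B * P) *ᵥ w := by
    rw [← hPw, ← dotProduct_mulVec_mul_mul hP]
  have hw : t * (w ⬝ᵥ w) < w ⬝ᵥ (P * B * P) *ᵥ w := hAw ▸ hBw ▸ h
  obtain ⟨i, hi⟩ := hN.exists_lt_eigenvalues_of_lt_dotProduct hw
  have hdet : (P * B * P).det = B.det / A.det := by
    rw [det_mul, det_mul, det_nonsing_inv, Ring.inverse_eq_inv', ← hA.det_sqrt_mul_self]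
    field_simp
  exact hdet ▸ hN.lt_det_of_posSemidef_sub_one hN1 hi

lemma mul_dotProduct_mulVec_lt_of_perturbed {Va Vb Ea Eb : Matrix n n ℝ} {lam η α : ℝ}
    (hlam : 0 < lam) (hη : 0 ≤ η) (hα : 0 ≤ α) (hVal : (Va - lam • 1).PosSemidef)
    (hVab : (Vb - Va).PosSemidef) (hEa : (Ea + η • 1).PosSemidef) (hEb : (η • 1 - Eb).PosSemidef)
    {u : n → ℝ} (h : α * (u ⬝ᵥ (Va + Ea) *ᵥ u) < u ⬝ᵥ (Vb + Eb) *ᵥ u) :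
    α * (1 - η / lam) / (1 + η / lam) * (u ⬝ᵥ Va *ᵥ u) < u ⬝ᵥ Vb *ᵥ u := by
  set ρ := η / lam
  have hρ : 0 ≤ ρ := div_nonneg hη hlam.le
  have hVau := dotProduct_mulVec_le_of_posSemidef_sub hVal u
  have hVbu := dotProduct_mulVec_le_of_posSemidef_sub hVab u
  have hEau := dotProduct_mulVec_le_of_posSemidef_sub (A := (-η) • 1) (by simpa using hEa) u
  have hEbu := dotProduct_mulVec_le_of_posSemidef_sub hEb u
  rw [dotProduct_smul_one_mulVec] at hVau hEau hEbu
  rw [add_mulVec, add_mulVec, dotProduct_add, dotProduct_add] at h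
  have hηρ : η * (u ⬝ᵥ u) ≤ ρ * (u ⬝ᵥ Va *ᵥ u) := by
    calc η * (u ⬝ᵥ u) = ρ * (lam * (u ⬝ᵥ u)) := by
          simp only [ρ]; field_simp
      _ ≤ ρ * (u ⬝ᵥ Va *ᵥ u) := mul_le_mul_of_nonneg_left hVau hρ
  -- On `u`, `η • 1 ≤ ρ • Va`, hence `α (1 - ρ) Va ≤ α (Va + Ea)` and `Vb + Eb ≤ (1 + ρ) Vb`.
  have key : α * (1 - ρ) * (u ⬝ᵥ Va *ᵥ u) < (1 + ρ) * (u ⬝ᵥ Vb *ᵥ u) := by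
    linarith [mul_le_mul_of_nonneg_left hηρ hα, mul_le_mul_of_nonneg_left hVbu hρ,
      mul_le_mul_of_nonneg_left hEau hα]
  rw [div_mul_eq_mul_div, div_lt_iff₀ (by positivity)]
  linarith

end Matrix

theorem stmt_17_general {d : ℕ} (Va Vb Ea Eb : Matrix (Fin d) (Fin d) ℝ)
    (hVb : Vb.IsHermitian)
    (lam η : ℝ) (hlam : 0 < lam) (hη : 0 ≤ η)
    (hVal : (Va - lam • (1 : Matrix (Fin d) (Fin d) ℝ)).PosSemidef)
    (hVab : (Vb - Va).PosSemidef)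
    (hEa2 : (Ea + η • (1 : Matrix (Fin d) (Fin d) ℝ)).PosSemidef)
    (hEb1 : (η • (1 : Matrix (Fin d) (Fin d) ℝ) - Eb).PosSemidef)
    (ρ cρ : ℝ) (hρ : ρ = η / lam) (hρ1 : ρ < 1) (hcρ : cρ = (1 + ρ) / (1 - ρ))
    (htaP : (Va + Ea).PosSemidef)
    (M : Matrix (Fin d) (Fin d) ℝ)
    (hM : M = (htaP.sqrt)⁻¹ * (Vb + Eb) * (htaP.sqrt)⁻¹)
    (hMH : M.IsHermitian)
    (α : ℝ) (hα : cρ < α) (hmax : α < ⨆ i, hMH.eigenvalues i) :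
    α / cρ < Vb.det / Va.det := by
  have hηlam : η < lam := by rwa [hρ, div_lt_one hlam] at hρ1
  have hα0 : 0 < α := by
    have hρ0 : 0 ≤ ρ := hρ ▸ div_nonneg hη hlam.le
    have : 1 ≤ cρ := by rw [hcρ, le_div_iff₀ (by linarith)]; linarith
    linarith
  have hVaE : (Va + Ea).PosDef := posDef_of_posSemidef_sub_smul_one (c := lam - η)
    (by convert hVal.add hEa2 using 1; module) (by linarith)
  rw [htaP.sqrt_eq_cfcSqrt] at hM
  subst hM
  obtain ⟨i, hi⟩ : ∃ i, α < hMH.eigenvalues i := by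
    rcases isEmpty_or_nonempty (Fin d) with _ | _
    · rw [Real.iSup_of_isEmpty] at hmax; linarith
    · exact exists_lt_of_lt_ciSup hmax
  obtain ⟨u, hu⟩ := exists_lt_dotProduct_of_lt_eigenvalues hVaE hMH hi
  have hα_div : α / cρ = α * (1 - η / lam) / (1 + η / lam) := by
    rw [hcρ, ← hρ]; field_simp
  rw [hα_div]
  exact lt_det_div_det_of_lt_dotProduct (posDef_of_posSemidef_sub_smul_one hVal hlam) hVb hVab
    (mul_dotProduct_mulVec_lt_of_perturbed hlam hη hα0.le hVal hVab hEa2 hEb1 hu)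

/-- Part (ii) ingredient: if the private Rayleigh trigger fires,
`λ_max((V_a+E_a)^{-1/2}(V_b+E_b)(V_a+E_a)^{-1/2}) > α` with `α > c_ρ`, then
`det V_b / det V_a > α / c_ρ`. -/
theorem stmt_17 {d : ℕ} (Va Vb Ea Eb : Matrix (Fin d) (Fin d) ℝ)
    (hVa : Va.IsHermitian) (hVb : Vb.IsHermitian)
    (hEa : Ea.IsHermitian) (hEb : Eb.IsHermitian)
    (lam η : ℝ) (hlam : 0 < lam) (hη : 0 ≤ η)
    (hVal : (Va - lam • (1 : Matrix (Fin d) (Fin d) ℝ)).PosSemidef)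
    (hVab : (Vb - Va).PosSemidef)
    (hEa1 : (η • (1 : Matrix (Fin d) (Fin d) ℝ) - Ea).PosSemidef)
    (hEa2 : (Ea + η • (1 : Matrix (Fin d) (Fin d) ℝ)).PosSemidef)
    (hEb1 : (η • (1 : Matrix (Fin d) (Fin d) ℝ) - Eb).PosSemidef)
    (hEb2 : (Eb + η • (1 : Matrix (Fin d) (Fin d) ℝ)).PosSemidef)
    (ρ cρ : ℝ) (hρ : ρ = η / lam) (hρ1 : ρ < 1) (hcρ : cρ = (1 + ρ) / (1 - ρ))
    (htaP : (Va + Ea).PosSemidef)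
    (M : Matrix (Fin d) (Fin d) ℝ)
    (hM : M = (htaP.sqrt)⁻¹ * (Vb + Eb) * (htaP.sqrt)⁻¹)
    (hMH : M.IsHermitian)
    (α : ℝ) (hα : cρ < α) (hmax : α < ⨆ i, hMH.eigenvalues i) :
    α / cρ < Vb.det / Va.det :=
  stmt_17_general Va Vb Ea Eb hVb lam η hlam hη hVal hVab hEa2 hEb1 ρ cρ hρ hρ1 hcρ htaP M hM hMH α
    hα hmax
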